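/- Let p be a prime and q = p^k with k ≥ 1, and let G = SL(2, F_q). A reducible character ψ of G of degree q is p-vanishing if and only if ψ is Syl_p-vanishing and ψ(z) = ψ(1) for every element z of the center of G. -/

import Mathlib

open scoped ComplexOrder

noncomputable section

/-- `χ : G → ℂ` is the character of some finite-dimensional complex representation of `G`. -/
def IsChar (G : Type) [Group G] (χ : G → ℂ) : Prop :=
  ∃ V : FDRep ℂ G, χ = V.character

/-- `χ` is the character of an irreducible finite-dimensional complex representation of `G`. -/
def IsIrredChar (G : Type) [Group G] (χ : G → ℂ) : Prop :=
  ∃ V : FDRep ℂ G, CategoryTheory.Simple V ∧ χ = V.character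

/-- `χ` is `p`-vanishing: it vanishes at every element whose order is divisible by `p`. -/
def PVanishing (G : Type) [Group G] (p : ℕ) (χ : G → ℂ) : Prop :=
  ∀ g : G, p ∣ orderOf g → χ g = 0

/-- `χ` is `Syl_p`-vanishing: it vanishes at every nonidentity element of `p`-power order. -/
def SylPVanishing (G : Type) [Group G] (p : ℕ) (χ : G → ℂ) : Prop :=
  ∀ g : G, g ≠ 1 → (∃ m : ℕ, orderOf g = p ^ m) → χ g = 0

/-- The standard inner product of complex class functions on a finite group:
`⟨α, β⟩ = |G|⁻¹ ∑ g, α g * conj (β g)`. -/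
def charInner (G : Type) [Group G] (α β : G → ℂ) : ℂ :=
  (Nat.card G : ℂ)⁻¹ * ∑ᶠ g : G, α g * (starRingEnd ℂ) (β g)

/-!
If `ψ` is `p`-vanishing it vanishes at the nontrivial transvections `T_b` and, for odd `p`,
at the elements `-T_b` of order `2p`. Averaging `ρ` over the transvection group gives an
idempotent `P` of trace `ψ(1)/q = 1` commuting with the involution `A = ρ(-1)`; the idempotents
`(1 ± A)P/2` have natural traces, so `ψ(-1)/q = tr(AP) = ±1`. The value `-q` would force
`ρ(-1) = -1`, of determinant `(-1)^q = -1`, although `-1` is a commutator in `SL(2, q)`.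

Conversely, an element whose order is divisible by `p` is `±u` with `u` of order `p`: it
commutes with a nonzero square-zero matrix, whose centralizer is `F[m]`. If
`ψ(-1) = ψ(1)` then `ρ(-1) = 1`, so `ψ(±u) = ψ(u) = 0`.
-/

open Module Matrix
open scoped MatrixGroups commutatorElement

theorem isIdempotentElem_half_one_add {K R : Type*} [Field K] [Ring R] [Algebra K R] {a : R}
    (ha : a * a = 1) : IsIdempotentElem ((2⁻¹ : K) • (1 + a)) := by
  have hsq : (1 + a) * (1 + a) = (2 : K) • (1 + a) := by
    rw [two_smul, mul_add, add_mul, add_mul, ha]; noncomm_ring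
  rw [IsIdempotentElem, smul_mul_smul_comm, hsq, smul_smul]
  congr 1
  rcases eq_or_ne (2 : K) 0 with h | h
  · simp [h]
  · field_simp

theorem Matrix.pow_card_eq_zero_of_isNilpotent {n R : Type*} [Fintype n] [DecidableEq n]
    [CommRing R] [IsDomain R] {M : Matrix n n R} (hM : IsNilpotent M) :
    M ^ Fintype.card n = 0 := by
  have h := (isNilpotent_charpoly_sub_pow_of_isNilpotent hM).eq_zero
  rw [sub_eq_zero] at h
  simpa [h] using aeval_self_charpoly M

theorem one_add_pow_char_eq_one {R : Type*} [Ring R] (p : ℕ) [Fact p.Prime] [CharP R p] {n : R}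
    (hn : n * n = 0) : (1 + n) ^ p = 1 := by
  rw [add_pow_char_of_commute p (Commute.one_left n), one_pow,
    pow_eq_zero_of_le (Fact.out : p.Prime).two_le (by rwa [sq]), add_zero]

section Trace

variable {K V : Type*} [Field K] [CharZero K] [AddCommGroup V] [Module K V]
  [FiniteDimensional K V]

theorem LinearMap.eq_one_of_mul_self_eq_one_of_trace_eq_finrank {A : End K V} (hA : A * A = 1)
    (htr : LinearMap.trace K V A = finrank K V) : A = 1 := by
  have hidem := isIdempotentElem_half_one_add (K := K) (a := -A) (by rw [neg_mul_neg, hA])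
  have htr0 : LinearMap.trace K V ((2⁻¹ : K) • (1 + -A)) = 0 := by
    rw [map_smul, map_add, map_neg, LinearMap.trace_one, htr, add_neg_cancel, smul_zero]
  have := LinearMap.IsIdempotentElem.eq_zero_of_trace_eq_zero hidem htr0
  rw [smul_eq_zero, ← sub_eq_add_neg, sub_eq_zero] at this
  exact (this.resolve_left (by norm_num)).symm

theorem LinearMap.trace_mul_eq_one_or_neg_one {A P : End K V} (hA : A * A = 1)
    (hP : IsIdempotentElem P) (hAP : Commute A P) (htr : LinearMap.trace K V P = 1) :
    LinearMap.trace K V (A * P) = 1 ∨ LinearMap.trace K V (A * P) = -1 := by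
  have hnat (B : End K V) (hB : B * B = 1) (hBP : Commute B P) :
      ∃ n : ℕ, 2⁻¹ * (1 + LinearMap.trace K V (B * P)) = n := by
    have hE := (isIdempotentElem_half_one_add (K := K) hB).mul_of_commute
      (((Commute.one_left P).add_left hBP).smul_left _) hP
    refine ⟨_, Eq.trans ?_ (IsIdempotentElem.isProj_range _ hE).trace⟩
    rw [smul_mul_assoc, add_mul, one_mul, map_smul, map_add, htr, smul_eq_mul]
  obtain ⟨n₁, hn₁⟩ := hnat A hA hAP
  obtain ⟨n₂, hn₂⟩ := hnat (-A) (by rw [neg_mul_neg, hA]) hAP.neg_left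
  rw [neg_mul, map_neg] at hn₂
  have hsum : n₁ + n₂ = 1 := by
    exact_mod_cast (show (n₁ + n₂ : K) = 1 by rw [← hn₁, ← hn₂]; ring)
  rcases Nat.add_eq_one_iff.mp hsum with ⟨rfl, rfl⟩ | ⟨rfl, rfl⟩
  · right; linear_combination 2 * hn₁
  · left; linear_combination -2 * hn₂

end Trace

namespace FDRep

variable {K G : Type} [Field K] [Group G]

theorem det_ρ_commutatorElement (V : FDRep K G) (a b : G) :
    LinearMap.det (V.ρ ⁅a, b⁆) = 1 := by
  let f : G →* Kˣ := (LinearMap.det.comp V.ρ).toHomUnits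
  have h : f ⁅a, b⁆ = 1 := by
    rw [map_commutatorElement, commutatorElement_eq_one_iff_commute]
    exact Commute.all _ _
  exact congrArg Units.val h

theorem ρ_eq_one_of_character_eq_character_one [CharZero K] (V : FDRep K G) {z : G}
    (hz : z * z = 1) (hχ : V.character z = V.character 1) : V.ρ z = 1 :=
  LinearMap.eq_one_of_mul_self_eq_one_of_trace_eq_finrank
    (by rw [← map_mul, hz, map_one]) (by rw [← char_one, ← hχ]; rfl)

end FDRep

theorem Representation.averageMap_eq_smul_sum {K G V : Type*} [Field K] [Group G] [Fintype G]
    [AddCommGroup V] [Module K V] [Invertible (Fintype.card G : K)]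
    (ρ : Representation K G V) :
    ρ.averageMap = ⅟(Fintype.card G : K) • ∑ g, ρ g := by
  simp [GroupAlgebra.average, map_sum]

theorem Representation.card_mul_trace_mul_averageMap {K G V : Type*} [Field K] [Group G]
    [Fintype G] [AddCommGroup V] [Module K V] [Invertible (Fintype.card G : K)]
    (ρ : Representation K G V) (f : End K V) :
    Fintype.card G * LinearMap.trace K V (f * ρ.averageMap) =
      ∑ g, LinearMap.trace K V (f * ρ g) := by
  rw [ρ.averageMap_eq_smul_sum, mul_smul_comm, map_smul, smul_eq_mul, ← mul_assoc,
    mul_invOf_self, one_mul, Finset.mul_sum, map_sum]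

namespace SL2

variable {F : Type*} [Field F]

theorem exists_eq_smul_one_add_smul_of_commute {m g : Matrix (Fin 2) (Fin 2) F} (hm0 : m ≠ 0)
    (hm : m * m = 0) (hgm : Commute g m) : ∃ α β : F, g = α • 1 + β • m := by
  have hsq : ∀ i j, (m * m) i j = 0 := fun i j => by rw [hm]; rfl
  have hc : ∀ i j, (g * m) i j = (m * g) i j := fun i j => by rw [hgm.eq]
  simp only [mul_apply, Fin.sum_univ_two] at hsq hc
  -- `β` is read off a nonzero off-diagonal entry of `m`; a diagonal square-zero `m` is zero.
  by_cases h01 : m 0 1 = 0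
  · by_cases h10 : m 1 0 = 0
    · refine absurd (Matrix.ext fun i j => ?_) hm0
      have := hsq 0 0
      have := hsq 1 1
      fin_cases i <;> fin_cases j <;> simp_all
    · refine ⟨g 0 0 - g 1 0 / m 1 0 * m 0 0, g 1 0 / m 1 0, Matrix.ext fun i j => ?_⟩
      fin_cases i <;> fin_cases j <;>
        simp only [Fin.zero_eta, Fin.mk_one, Fin.isValue, Matrix.add_apply, Matrix.smul_apply,
          smul_eq_mul, one_apply_eq, one_apply_ne, ne_eq, zero_ne_one, one_ne_zero,
          not_false_eq_true, mul_one, mul_zero, zero_add, sub_add_cancel] <;>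
        field_simp
      · linear_combination hc 0 0
      · linear_combination hc 1 0
  · refine ⟨g 0 0 - g 0 1 / m 0 1 * m 0 0, g 0 1 / m 0 1, Matrix.ext fun i j => ?_⟩
    fin_cases i <;> fin_cases j <;>
      simp only [Fin.zero_eta, Fin.mk_one, Fin.isValue, Matrix.add_apply, Matrix.smul_apply,
        smul_eq_mul, one_apply_eq, one_apply_ne, ne_eq, zero_ne_one, one_ne_zero,
        not_false_eq_true, mul_one, mul_zero, zero_add, sub_add_cancel] <;>
      field_simp
    · linear_combination -hc 0 0
    · linear_combination -hc 0 1

theorem det_smul_one_add_smul {m : Matrix (Fin 2) (Fin 2) F} (hm : m * m = 0) (α β : F) :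
    det (α • 1 + β • m) = α ^ 2 := by
  have hnil : IsNilpotent m := ⟨2, by rw [sq, hm]⟩
  have htr : trace m = 0 := (isNilpotent_trace_of_isNilpotent hnil).eq_zero
  have hdet : det m = 0 := pow_eq_zero_iff two_ne_zero |>.mp (by rw [← det_pow, sq, hm, det_zero])
  rw [trace_fin_two] at htr
  rw [det_fin_two] at hdet ⊢
  simp only [Matrix.add_apply, Matrix.smul_apply, smul_eq_mul, one_apply_eq, one_apply_ne,
    ne_eq, zero_ne_one, one_ne_zero, not_false_eq_true, mul_one, mul_zero, zero_add]
  linear_combination α * β * htr + β ^ 2 * hdet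

theorem eq_one_or_eq_neg_one_of_mem_center {z : SL(2, F)} (hz : z ∈ Subgroup.center SL(2, F)) :
    z = 1 ∨ z = -1 := by
  obtain ⟨r, hr, hrz⟩ := Matrix.SpecialLinearGroup.mem_center_iff.mp hz
  rw [Fintype.card_fin, sq, mul_self_eq_one_iff] at hr
  rcases hr with rfl | rfl
  · exact .inl (Subtype.ext (by simp [← hrz]))
  · right
    ext i j
    fin_cases i <;> fin_cases j <;> simp [← hrz, Matrix.SpecialLinearGroup.coe_neg]

theorem neg_one_eq_one [CharP F 2] : (-1 : SL(2, F)) = 1 := by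
  ext i j
  simp [CharTwo.neg_eq]

def transvectionHom : Multiplicative F →* SL(2, F) where
  toFun b := SpecialLinearGroup.transvection zero_ne_one b.toAdd
  map_one' := SpecialLinearGroup.transvection_coeff_zero _
  map_mul' _ _ := SpecialLinearGroup.transvection_add _ _ _

theorem transvectionHom_injective : Function.Injective (transvectionHom (F := F)) := by
  refine (injective_iff_map_eq_one _).mpr fun b hb => ?_
  exact (Matrix.SpecialLinearGroup.transvection_mem_center_iff zero_ne_one b.toAdd).mp
    (hb ▸ Subgroup.one_mem _)

theorem exists_commutatorElement_eq_neg_one [Finite F] : ∃ a b : SL(2, F), ⁅a, b⁆ = -1 := by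
  have : NeZero (ringChar F) := ⟨CharP.char_ne_zero_of_finite F _⟩
  obtain ⟨c, d, hcd⟩ := CharP.sq_add_sq F (ringChar F) (-1)
  push_cast at hcd
  -- `a` anticommutes with every traceless symmetric matrix; `c² + d² = -1` makes `b` unimodular.
  let a : SL(2, F) := ⟨!![0, 1; -1, 0], by simp⟩
  let b : SL(2, F) := ⟨!![(c : F), d; d, -c], by simp [det_fin_two_of]; linear_combination -hcd⟩
  have hab : a * b = -(b * a) := by
    ext i j
    rw [Matrix.SpecialLinearGroup.coe_neg, Matrix.SpecialLinearGroup.coe_mul,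
      Matrix.SpecialLinearGroup.coe_mul]
    fin_cases i <;> fin_cases j <;> simp [a, b]
  refine ⟨a, b, ?_⟩
  rw [commutatorElement_def, hab, neg_mul, neg_mul, mul_assoc b, mul_inv_cancel, mul_one,
    mul_inv_cancel]

section CharP

variable (p : ℕ) [Fact p.Prime] [CharP F p]

theorem orderOf_transvectionHom {b : Multiplicative F} (hb : b ≠ 1) :
    orderOf (transvectionHom b) = p := by
  rw [orderOf_injective _ transvectionHom_injective]
  exact (orderOf_ofAdd_eq_addOrderOf b.toAdd).trans
    (addOrderOf_eq_prime (by simp [nsmul_eq_mul]) hb)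

theorem dvd_orderOf_neg_transvectionHom (hp : p ≠ 2) {b : Multiplicative F} (hb : b ≠ 1) :
    p ∣ orderOf (-transvectionHom b) := by
  have h2 : (2 : F) ≠ 0 := Ring.two_ne_zero (by rwa [ringChar.eq F p])
  have hb2 : b ^ 2 ≠ 1 := fun h =>
    hb (by simpa [h2] using congrArg Multiplicative.toAdd h)
  rw [← orderOf_transvectionHom p hb2, map_pow, ← neg_sq]
  exact orderOf_pow_dvd 2

theorem pow_char_eq_one_of_coe_eq_one_add {u : SL(2, F)} {n : Matrix (Fin 2) (Fin 2) F}
    (hn : n * n = 0) (hu : (u : Matrix (Fin 2) (Fin 2) F) = 1 + n) : u ^ p = 1 :=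
  SpecialLinearGroup.coeMonoidHom_injective <| by
    rw [map_pow, map_one, SpecialLinearGroup.coeMonoidHom_apply, hu, one_add_pow_char_eq_one p hn]

theorem exists_ne_zero_mul_self_eq_zero_commute [Finite F] {g : SL(2, F)} (hg : p ∣ orderOf g) :
    ∃ m : Matrix (Fin 2) (Fin 2) F,
      m ≠ 0 ∧ m * m = 0 ∧ Commute (g : Matrix (Fin 2) (Fin 2) F) m := by
  obtain ⟨h, hh, hgh⟩ : ∃ h : SL(2, F), orderOf h = p ∧ Commute g h :=
    ⟨_, orderOf_pow_orderOf_div (orderOf_pos g).ne' hg, (Commute.refl g).pow_right _⟩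
  obtain ⟨m, hhm⟩ : ∃ m, (h : Matrix (Fin 2) (Fin 2) F) = 1 + m := ⟨h - 1, by abel⟩
  have hm0 : m ≠ 0 := by
    rintro rfl
    refine (Fact.out : p.Prime).ne_one (hh ▸ orderOf_eq_one_iff.mpr ?_)
    exact SpecialLinearGroup.coeMonoidHom_injective (by simpa using hhm)
  have hmp : m ^ p = 0 := by
    have := congrArg SpecialLinearGroup.coeMonoidHom (pow_orderOf_eq_one h)
    rwa [map_pow, map_one, SpecialLinearGroup.coeMonoidHom_apply, hh, hhm,
      add_pow_char_of_commute p (Commute.one_left m), one_pow, add_eq_left] at this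
  refine ⟨m, hm0, by simpa [sq] using pow_card_eq_zero_of_isNilpotent ⟨p, hmp⟩, ?_⟩
  have := (hgh.map SpecialLinearGroup.coeMonoidHom).sub_right (Commute.one_right _)
  rwa [SpecialLinearGroup.coeMonoidHom_apply, SpecialLinearGroup.coeMonoidHom_apply, hhm,
    add_sub_cancel_left] at this

theorem exists_pow_char_eq_one_and_eq_or_eq_neg [Finite F] {g : SL(2, F)}
    (hg : p ∣ orderOf g) : ∃ u : SL(2, F), u ^ p = 1 ∧ (g = u ∨ g = -u) := by
  obtain ⟨m, hm0, hm, hgm⟩ := exists_ne_zero_mul_self_eq_zero_commute p hg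
  obtain ⟨α, β, hαβ⟩ := exists_eq_smul_one_add_smul_of_commute hm0 hm hgm
  have hα : α ^ 2 = 1 := by rw [← det_smul_one_add_smul hm α β, ← hαβ, g.det_coe]
  have hβm : (β • m) * (β • m) = 0 := by rw [smul_mul_smul_comm, hm, smul_zero]
  rw [sq, mul_self_eq_one_iff] at hα
  rcases hα with rfl | rfl
  · exact ⟨g, pow_char_eq_one_of_coe_eq_one_add p hβm (by rw [hαβ, one_smul]), .inl rfl⟩
  · refine ⟨-g, pow_char_eq_one_of_coe_eq_one_add p (n := -(β • m)) (by simpa using hβm) ?_,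
      .inr (neg_neg g).symm⟩
    rw [SpecialLinearGroup.coe_neg, hαβ, neg_one_smul, neg_add, neg_neg]

theorem exists_orderOf_eq_and_eq_or_eq_neg [Finite F] {g : SL(2, F)} (hg : p ∣ orderOf g) :
    ∃ u : SL(2, F), orderOf u = p ∧ (g = u ∨ g = -u) := by
  obtain ⟨u, hu, hgu⟩ := exists_pow_char_eq_one_and_eq_or_eq_neg p hg
  refine ⟨u, orderOf_eq_prime hu ?_, hgu⟩
  rintro rfl
  have hp : p.Prime := Fact.out
  have hg2 : p ∣ 2 := hg.trans (orderOf_dvd_of_pow_eq_one (by rcases hgu with rfl | rfl <;> simp))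
  obtain rfl := (Nat.prime_dvd_prime_iff_eq hp Nat.prime_two).mp hg2
  rw [neg_one_eq_one, or_self] at hgu
  rw [hgu, orderOf_one] at hg
  exact hp.ne_one (Nat.dvd_one.mp hg)

end CharP

section Representation

variable {K F : Type} [Field K] [CharZero K] [Field F]

theorem character_neg_one_ne_neg_character_one [Finite F] (V : FDRep K SL(2, F))
    (hodd : Odd (finrank K V)) : V.character (-1) ≠ -V.character 1 := by
  intro h
  have hA : -V.ρ (-1) = 1 := by
    refine LinearMap.eq_one_of_mul_self_eq_one_of_trace_eq_finrank
      (by rw [neg_mul_neg, ← map_mul, neg_one_mul, neg_neg, map_one]) ?_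
    rw [map_neg, ← FDRep.char_one, neg_eq_iff_eq_neg]
    exact h
  obtain ⟨a, b, hab⟩ := exists_commutatorElement_eq_neg_one (F := F)
  have hdet := V.det_ρ_commutatorElement a b
  rw [hab, ← neg_neg (V.ρ (-1)), hA, ← neg_one_smul K 1, LinearMap.det_smul, map_one, mul_one,
    hodd.neg_one_pow] at hdet
  norm_num at hdet

variable (p : ℕ) [Fact p.Prime] [CharP F p]

theorem character_neg_one_eq_or_eq_neg [Fintype F] (hp : p ≠ 2) (V : FDRep K SL(2, F))
    (hdeg : finrank K V = Fintype.card F)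
    (hvan : ∀ g : SL(2, F), p ∣ orderOf g → V.character g = 0) :
    V.character (-1) = V.character 1 ∨ V.character (-1) = -V.character 1 := by
  let _ : Invertible (Fintype.card (Multiplicative F) : K) :=
    invertibleOfNonzero (Nat.cast_ne_zero.mpr Fintype.card_ne_zero)
  set q : K := (Fintype.card F : K)
  have hq : q ≠ 0 := Nat.cast_ne_zero.mpr Fintype.card_ne_zero
  set P := Representation.averageMap (V.ρ.comp transvectionHom) with hP
  have htrace (z : SL(2, F)) (hz : ∀ b ≠ 1, V.character (z * transvectionHom b) = 0) :
      q * LinearMap.trace K V (V.ρ z * P) = V.character z := by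
    have := Representation.card_mul_trace_mul_averageMap (V.ρ.comp transvectionHom) (V.ρ z)
    rw [Fintype.card_multiplicative] at this
    rw [this, Finset.sum_eq_single 1 (fun b _ hb => by
      rw [MonoidHom.comp_apply, ← map_mul]; exact hz b hb) (by simp)]
    simp [FDRep.character]
  have hχ1 : V.character 1 = q := by rw [FDRep.char_one, hdeg]
  have hP1 : LinearMap.trace K V P = 1 := by
    have := htrace 1 fun b hb => by simpa using hvan _ (orderOf_transvectionHom p hb).symm.dvd
    rw [map_one, one_mul, hχ1] at this
    exact (mul_eq_left₀ hq).mp this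
  have hA : V.ρ (-1) * V.ρ (-1) = 1 := by rw [← map_mul, neg_one_mul, neg_neg, map_one]
  have hAP : Commute (V.ρ (-1)) P := by
    rw [hP, Representation.averageMap_eq_smul_sum]
    exact (Commute.sum_right _ _ _ fun g _ => (Commute.neg_one_left _).map V.ρ).smul_right _
  have hχ := htrace (-1) fun b hb => by
    simpa using hvan _ (dvd_orderOf_neg_transvectionHom p hp hb)
  rw [hχ1, ← hχ]
  rcases LinearMap.trace_mul_eq_one_or_neg_one hA
    (Representation.isProj_averageMap _).isIdempotentElem hAP hP1 with h | h <;> rw [h]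
  · exact .inl (mul_one q)
  · exact .inr (mul_neg_one q)

theorem character_neg_one_eq_character_one [Fintype F] (V : FDRep K SL(2, F))
    (hdeg : finrank K V = Fintype.card F)
    (hvan : ∀ g : SL(2, F), p ∣ orderOf g → V.character g = 0) :
    V.character (-1) = V.character 1 := by
  rcases eq_or_ne p 2 with rfl | hp
  · rw [neg_one_eq_one]
  have hodd : Odd (finrank K V) := hdeg ▸
    Nat.odd_iff.mpr (FiniteField.odd_card_of_char_ne_two (by rwa [ringChar.eq F p]))
  exact (character_neg_one_eq_or_eq_neg p hp V hdeg hvan).resolve_right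
    (character_neg_one_ne_neg_character_one V hodd)

theorem character_eq_zero_of_dvd_orderOf [Finite F] (V : FDRep K SL(2, F))
    (hunip : ∀ u : SL(2, F), orderOf u = p → V.character u = 0)
    (hcenter : V.character (-1) = V.character 1) {g : SL(2, F)} (hg : p ∣ orderOf g) :
    V.character g = 0 := by
  obtain ⟨u, hu, rfl | hgu⟩ := exists_orderOf_eq_and_eq_or_eq_neg p hg
  · exact hunip g hu
  · have hA : V.ρ (-1) = 1 :=
      V.ρ_eq_one_of_character_eq_character_one (by rw [neg_one_mul, neg_neg]) hcenter
    rw [hgu, ← neg_one_mul, FDRep.character, map_mul, hA, one_mul]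
    exact hunip u hu

end Representation

end SL2

theorem sl2_reducible_pVanishing_iff_general
    (p k : ℕ) [Fact p.Prime] (hk : 1 ≤ k)
    (ψ : Matrix.SpecialLinearGroup (Fin 2) (GaloisField p k) → ℂ)
    (hψ : IsChar (Matrix.SpecialLinearGroup (Fin 2) (GaloisField p k)) ψ)
    (hdeg : ψ 1 = ((p ^ k : ℕ) : ℂ)) :
    PVanishing (Matrix.SpecialLinearGroup (Fin 2) (GaloisField p k)) p ψ ↔
      (SylPVanishing (Matrix.SpecialLinearGroup (Fin 2) (GaloisField p k)) p ψ ∧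
        ∀ z ∈ Subgroup.center (Matrix.SpecialLinearGroup (Fin 2) (GaloisField p k)),
          ψ z = ψ 1) := by
  obtain ⟨V, rfl⟩ := hψ
  let _ : Fintype (GaloisField p k) := Fintype.ofFinite _
  have hrank : finrank ℂ V = Fintype.card (GaloisField p k) := by
    rw [← Nat.card_eq_fintype_card, GaloisField.card p k (by omega)]
    exact_mod_cast (FDRep.char_one V).symm.trans hdeg
  constructor
  · intro hvan
    refine ⟨fun g hg1 ⟨m, hm⟩ => hvan g ?_, fun z hz => ?_⟩
    · rcases m with _ | m
      · exact absurd (orderOf_eq_one_iff.mp hm) hg1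
      · exact hm ▸ dvd_pow_self p m.succ_ne_zero
    · rcases SL2.eq_one_or_eq_neg_one_of_mem_center hz with rfl | rfl
      · rfl
      · exact SL2.character_neg_one_eq_character_one p V hrank hvan
  · rintro ⟨hsyl, hcenter⟩ g hg
    have hunip (u) (hu : orderOf u = p) : V.character u = 0 :=
      hsyl u (fun hu1 => (Fact.out : p.Prime).ne_one (by rw [← hu, hu1, orderOf_one]))
        ⟨1, by rw [hu, pow_one]⟩
    exact SL2.character_eq_zero_of_dvd_orderOf p V hunip
      (hcenter _ (Subgroup.mem_center_iff.mpr fun g => (Commute.neg_one_left g).eq.symm)) hg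

/-- A reducible character `ψ` of `SL(2, F_q)` of degree `q` is `p`-vanishing iff it is
`Syl_p`-vanishing and `ψ(z) = ψ(1)` for every central element `z`. -/
theorem sl2_reducible_pVanishing_iff
    (p k : ℕ) [Fact p.Prime] (hk : 1 ≤ k)
    (ψ : Matrix.SpecialLinearGroup (Fin 2) (GaloisField p k) → ℂ)
    (hψ : IsChar (Matrix.SpecialLinearGroup (Fin 2) (GaloisField p k)) ψ)
    (hred : ¬ IsIrredChar (Matrix.SpecialLinearGroup (Fin 2) (GaloisField p k)) ψ)
    (hdeg : ψ 1 = ((p ^ k : ℕ) : ℂ)) :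
    PVanishing (Matrix.SpecialLinearGroup (Fin 2) (GaloisField p k)) p ψ ↔
      (SylPVanishing (Matrix.SpecialLinearGroup (Fin 2) (GaloisField p k)) p ψ ∧
        ∀ z ∈ Subgroup.center (Matrix.SpecialLinearGroup (Fin 2) (GaloisField p k)),
          ψ z = ψ 1) :=
  sl2_reducible_pVanishing_iff_general p k hk ψ hψ hdeg
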